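/- If u and v are convex functions on an open set Ω ⊆ ℝⁿ, then the Monge–Ampère measure of max(u, v) restricted to the open set {u > v} equals the Monge–Ampère measure of u restricted to {u > v}. -/
import Mathlib


open RealInnerProductSpace

open MeasureTheory

/-- The subdifferential of `f : ℝⁿ → ℝ` at `p` relative to the set `Ω`. -/
def subdiffOn {n : ℕ} (Ω : Set (EuclideanSpace ℝ (Fin n)))
    (f : EuclideanSpace ℝ (Fin n) → ℝ) (p : EuclideanSpace ℝ (Fin n)) :
    Set (EuclideanSpace ℝ (Fin n)) :=
  {g | ∀ q ∈ Ω, f q ≥ f p + ⟪g, q - p⟫}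

lemma subdiff_max_eq {n : ℕ} (Ω : Set (EuclideanSpace ℝ (Fin n)))
    (u v : EuclideanSpace ℝ (Fin n) → ℝ)
    (hu : ConvexOn ℝ Ω u) (hv : ConvexOn ℝ Ω v)
    (p : EuclideanSpace ℝ (Fin n)) (hp : p ∈ Ω) (hpv : v p < u p) :
    subdiffOn Ω (fun x => max (u x) (v x)) p = subdiffOn Ω u p := by
  have hmaxp : max (u p) (v p) = u p := max_eq_left hpv.le
  ext g
  simp only [subdiffOn, Set.mem_setOf_eq]
  constructor
  · intro hg q hq
    set I := ⟪g, q - p⟫ with hI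
    have hinner : ∀ t : ℝ, ⟪g, ((1-t)•p + t•q) - p⟫ = t * I := by
      intro t
      have h : ((1-t)•p + t•q) - p = t • (q - p) := by
        simp [smul_sub, sub_smul]; abel
      rw [h, real_inner_smul_right]
    have key : ∃ t : ℝ, 0 < t ∧ t ≤ 1 ∧
        v ((1-t)•p + t•q) ≤ u ((1-t)•p + t•q) := by
      by_contra h
      push_neg at h
      set C := v q - v p - I with hC
      set ε := u p - v p with hε'
      have hε : 0 < ε := sub_pos.2 hpv
      set t := min 1 (ε / (2*(|C|+1))) with ht'
      have ht0 : 0 < t := lt_min one_pos (div_pos hε (by positivity))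
      have ht1 : t ≤ 1 := min_le_left _ _
      have hmem : (1-t)•p + t•q ∈ Ω := hu.1 hp hq (by linarith) ht0.le (by ring)
      have h1 := hg _ hmem
      have h2 := h t ht0 ht1
      have h3 := hv.2 hp hq (by linarith : (0:ℝ) ≤ 1 - t) ht0.le (by ring)
      simp only [smul_eq_mul] at h3
      simp only [hmaxp, hinner t, max_eq_right h2.le] at h1
      have htr : t ≤ ε / (2*(|C|+1)) := min_le_right _ _
      have habs : C ≤ |C| := le_abs_self C
      have habs0 : (0:ℝ) ≤ |C| := abs_nonneg C
      have htC : t * C ≤ ε / 2 := by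
        calc t * C ≤ t * (|C|+1) := by nlinarith
          _ ≤ (ε / (2*(|C|+1))) * (|C|+1) := by nlinarith
          _ = ε / 2 := by field_simp
      nlinarith [h1, h3, htC]
    obtain ⟨t, ht0, ht1, htuv⟩ := key
    have hmem : (1-t)•p + t•q ∈ Ω := hu.1 hp hq (by linarith) ht0.le (by ring)
    have h1 := hg _ hmem
    simp only [hmaxp, hinner t, max_eq_left htuv] at h1
    have h3 := hu.2 hp hq (by linarith : (0:ℝ) ≤ 1 - t) ht0.le (by ring)
    simp only [smul_eq_mul] at h3
    nlinarith [h1, h3, mul_pos ht0 ht0]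
  · intro hg q hq
    have := hg q hq
    have h2 : max (u q) (v q) ≥ u q := le_max_left _ _
    simp only [hmaxp]
    linarith

/-- On the open set `{u > v}` the Monge–Ampère measure of `max(u,v)` coincides
with that of `u`. -/
theorem MA_measure_max_on_gt {n : ℕ} (Ω : Set (EuclideanSpace ℝ (Fin n)))
    (hΩ : IsOpen Ω) (u v : EuclideanSpace ℝ (Fin n) → ℝ)
    (hu : ConvexOn ℝ Ω u) (hv : ConvexOn ℝ Ω v)
    (E : Set (EuclideanSpace ℝ (Fin n))) (hE : MeasurableSet E)
    (hEsub : E ⊆ {p ∈ Ω | v p < u p}) :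
    volume (⋃ p ∈ E, subdiffOn Ω (fun x => max (u x) (v x)) p)
      = volume (⋃ p ∈ E, subdiffOn Ω u p) := by
  congr 1
  apply Set.iUnion₂_congr
  intro p hp
  obtain ⟨hpΩ, hpv⟩ := hEsub hp
  exact subdiff_max_eq Ω u v hu hv p hpΩ hpv
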